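/- Let m be a positive odd integer and t > 0. Then ψ^(m)(t) · ψ^(m+2)(t) − [ψ^(m+1)(t)]² ≥ 0. -/

import Mathlib

/-!
On `(0, ∞)` the digamma function coincides with the series `-γ + ∑ₙ (1/(n+1) - 1/(x+n))`: both
are increasing (for `ψ` because `log Γ` is convex), both satisfy `f (x + 1) = f x + 1/x`, and they
agree at `1`; squeezing `x + k` between consecutive integers shows that these properties determine
such a function. Differentiating termwise gives `ψ⁽ᵏ⁾(x) = (-1)^(k+1) k! ζ(k+1, x)`, so the Turán
expression equals `m! (m+2)! ζ(m+1, x) ζ(m+3, x) - (m+1)!² ζ(m+2, x)²`. It is nonnegative because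
`(m+1)!² ≤ m! (m+2)!` and, by Cauchy–Schwarz for the factorisation
`(x+n)^(-(m+2)) = (x+n)^(-(m+1)/2) (x+n)^(-(m+3)/2)`, `ζ(m+2, x)² ≤ ζ(m+1, x) ζ(m+3, x)`.
-/

/-- The digamma (psi) function: logarithmic derivative of the Gamma function. -/
noncomputable def psi (t : ℝ) : ℝ := deriv Real.Gamma t / Real.Gamma t

open Real Filter Topology Set
open scoped Nat

theorem summable_inv_add_pow (x : ℝ) {k : ℕ} (hk : 2 ≤ k) :
    Summable fun n : ℕ => ((x + n) ^ k)⁻¹ := by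
  refine Summable.of_norm ?_
  have := (Real.summable_one_div_nat_add_rpow x k).2 (by exact_mod_cast hk)
  simpa [add_comm x, abs_pow] using this

theorem hasDerivAt_inv_add_pow (a : ℝ) (k : ℕ) {y : ℝ} (hy : y + a ≠ 0) :
    HasDerivAt (fun z => ((z + a) ^ k)⁻¹) (-k * ((y + a) ^ (k + 1))⁻¹) y := by
  refine (((hasDerivAt_id' y).add_const a).fun_pow k |>.fun_inv (pow_ne_zero k hy)).congr_deriv ?_
  rcases k with _ | k
  · simp
  · rw [Nat.add_sub_cancel]
    field_simp
    ring

theorem tsum_sq_le_tsum_mul_tsum_of_sq_le_mul {ι : Type*} {r f g : ι → ℝ} (hr : 0 ≤ r)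
    (hf : 0 ≤ f) (hg : 0 ≤ g) (hrfg : ∀ i, r i ^ 2 ≤ f i * g i) (hfs : Summable f)
    (hgs : Summable g) : (∑' i, r i) ^ 2 ≤ (∑' i, f i) * ∑' i, g i := by
  have hFG : 0 ≤ (∑' i, f i) * ∑' i, g i := mul_nonneg (tsum_nonneg hf) (tsum_nonneg hg)
  suffices ∑' i, r i ≤ √((∑' i, f i) * ∑' i, g i) by
    simpa [sq_sqrt hFG] using pow_le_pow_left₀ (tsum_nonneg hr) this 2
  refine Real.tsum_le_of_sum_le hr fun s => Real.le_sqrt_of_sq_le ?_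
  calc (∑ i ∈ s, r i) ^ 2 ≤ (∑ i ∈ s, f i) * ∑ i ∈ s, g i :=
        Finset.sum_sq_le_sum_mul_sum_of_sq_le_mul s (fun i _ => hf i) (fun i _ => hg i)
          fun i _ => hrfg i
    _ ≤ (∑' i, f i) * ∑' i, g i :=
        mul_le_mul (hfs.sum_le_tsum s fun i _ => hf i) (hgs.sum_le_tsum s fun i _ => hg i)
          (Finset.sum_nonneg fun i _ => hg i) (tsum_nonneg hf)

theorem hasSum_sub_succ_of_tendsto_zero {E : Type*} [AddCommGroup E] [TopologicalSpace E]
    [IsTopologicalAddGroup E] [T2Space E] {f : ℕ → E} (hf : Tendsto f atTop (𝓝 0))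
    (hs : Summable fun n => f n - f (n + 1)) : HasSum (fun n => f n - f (n + 1)) (f 0) := by
  refine (hs.hasSum_iff_tendsto_nat).2 ?_
  simp_rw [Finset.sum_range_sub']
  simpa using tendsto_const_nhds.sub hf

theorem Nat.factorial_succ_sq_le (n : ℕ) : (n + 1)! ^ 2 ≤ n ! * (n + 2)! := by
  rw [Nat.factorial_succ (n + 1), Nat.factorial_succ n]
  nlinarith [Nat.zero_le (n !)]

section TermwiseDeriv

variable {g : ℕ → ℝ → ℝ} {C c : ℝ} {k : ℕ}

theorem norm_mul_inv_add_pow_le (hc : 0 < c) {y : ℝ} (hy : c < y) (n : ℕ) :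
    ‖C * ((y + n) ^ k)⁻¹‖ ≤ |C| * ((c + n) ^ k)⁻¹ := by
  have : 0 < y := hc.trans hy
  rw [norm_mul, Real.norm_eq_abs, norm_inv, norm_pow, Real.norm_of_nonneg (by positivity)]
  gcongr

theorem summable_of_hasDerivAt_mul_inv_add_pow (hc : 0 < c) (hk : 2 ≤ k)
    (hg : ∀ n, ∀ y > c, HasDerivAt (g n) (C * ((y + n) ^ k)⁻¹) y) {x₀ x : ℝ} (hx₀ : c < x₀)
    (h₀ : Summable fun n => g n x₀) (hx : c < x) : Summable fun n => g n x :=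
  summable_of_summable_hasDerivAt_of_isPreconnected ((summable_inv_add_pow c hk).mul_left |C|)
    isOpen_Ioi isPreconnected_Ioi (fun n => hg n)
    (fun n _ hy => norm_mul_inv_add_pow_le hc hy n) hx₀ h₀ hx

theorem hasDerivAt_tsum_of_hasDerivAt_mul_inv_add_pow (hc : 0 < c) (hk : 2 ≤ k)
    (hg : ∀ n, ∀ y > c, HasDerivAt (g n) (C * ((y + n) ^ k)⁻¹) y) {x : ℝ}
    (h : Summable fun n => g n x) (hx : c < x) :
    HasDerivAt (fun z => ∑' n, g n z) (C * ∑' n : ℕ, ((x + n) ^ k)⁻¹) x := by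
  rw [← tsum_mul_left]
  exact hasDerivAt_tsum_of_isPreconnected ((summable_inv_add_pow c hk).mul_left |C|)
    isOpen_Ioi isPreconnected_Ioi (fun n => hg n)
    (fun n _ hy => norm_mul_inv_add_pow_le hc hy n) hx h hx

end TermwiseDeriv

section AddOneEq

variable {f g : ℝ → ℝ}

theorem abs_sub_le_of_monotoneOn_of_add_one_eq (hf : MonotoneOn f (Ioi 0))
    (hg : MonotoneOn g (Ioi 0)) (hf1 : ∀ x > 0, f (x + 1) = f x + x⁻¹)
    (hg1 : ∀ x > 0, g (x + 1) = g x + x⁻¹) {a y : ℝ} (ha : 0 < a) (h_eq : f a = g a)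
    (hay : a ≤ y) (hya : y ≤ a + 1) : |f y - g y| ≤ a⁻¹ := by
  have hy : 0 < y := ha.trans_le hay
  have ha1 : 0 < a + 1 := by positivity
  have hf_lo := hf ha hy hay
  have hf_hi := (hf hy ha1 hya).trans_eq (hf1 a ha)
  have hg_lo := hg ha hy hay
  have hg_hi := (hg hy ha1 hya).trans_eq (hg1 a ha)
  rw [abs_le]
  constructor <;> linarith

theorem eqOn_Ioi_of_monotoneOn_of_add_one_eq (hf : MonotoneOn f (Ioi 0))
    (hg : MonotoneOn g (Ioi 0)) (hf1 : ∀ x > 0, f (x + 1) = f x + x⁻¹)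
    (hg1 : ∀ x > 0, g (x + 1) = g x + x⁻¹) (h1 : f 1 = g 1) : EqOn f g (Ioi 0) := by
  have h_nat : ∀ n : ℕ, f (n + 1) = g (n + 1) := by
    intro n
    induction n with
    | zero => simpa using h1
    | succ n ih =>
      push_cast
      rw [hf1 _ (by positivity), hg1 _ (by positivity), ih]
  have h_shift : ∀ x > 0, ∀ k : ℕ, f (x + k) - g (x + k) = f x - g x := by
    intro x hx k
    induction k with
    | zero => simp
    | succ k ih =>
      push_cast
      rw [← add_assoc, hf1 _ (by positivity), hg1 _ (by positivity), ← ih]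
      ring
  have h_bound : ∀ x > 0, ∀ k : ℕ, |f x - g x| ≤ 1 / ((k : ℝ) + 1) := by
    intro x hx k
    set n : ℕ := ⌊x⌋₊ + k
    have hlo : (n : ℝ) + 1 ≤ x + (k + 1) := by
      simp only [n, Nat.cast_add]; linarith [Nat.floor_le hx.le]
    have hhi : x + (k + 1) ≤ (n : ℝ) + 1 + 1 := by
      simp only [n, Nat.cast_add]; linarith [Nat.lt_floor_add_one x]
    calc |f x - g x| = |f (x + (k + 1)) - g (x + (k + 1))| := by
          rw [← h_shift x hx (k + 1)]; push_cast; rfl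
      _ ≤ ((n : ℝ) + 1)⁻¹ := abs_sub_le_of_monotoneOn_of_add_one_eq hf hg hf1 hg1
          (by positivity) (h_nat n) hlo hhi
      _ ≤ 1 / ((k : ℝ) + 1) := by rw [one_div]; gcongr; simp [n]
  intro x hx
  refine sub_eq_zero.1 (abs_nonpos_iff.1 ?_)
  exact ge_of_tendsto' tendsto_one_div_add_atTop_nhds_zero_nat (h_bound x hx)

end AddOneEq

-- The Hurwitz zeta function `ζ(k, x)` at integer `k`, for real `x` (Mathlib's `hurwitzZeta` takes
-- `x` modulo `1`).
noncomputable def hurwitzSeries (k : ℕ) (x : ℝ) : ℝ := ∑' n : ℕ, ((x + n) ^ k)⁻¹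

theorem hasDerivAt_hurwitzSeries {k : ℕ} (hk : 2 ≤ k) {x : ℝ} (hx : 0 < x) :
    HasDerivAt (hurwitzSeries k) (-k * hurwitzSeries (k + 1) x) x :=
  hasDerivAt_tsum_of_hasDerivAt_mul_inv_add_pow (half_pos hx) (by omega)
    (fun n y hy => hasDerivAt_inv_add_pow n k (by have := (half_pos hx).trans hy; positivity))
    (summable_inv_add_pow x hk) (half_lt_self hx)

theorem sq_hurwitzSeries_succ_le {k : ℕ} (hk : 2 ≤ k) {x : ℝ} (hx : 0 ≤ x) :
    hurwitzSeries (k + 1) x ^ 2 ≤ hurwitzSeries k x * hurwitzSeries (k + 2) x :=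
  tsum_sq_le_tsum_mul_tsum_of_sq_le_mul (fun n => by positivity) (fun n => by positivity)
    (fun n => by positivity) (fun n => le_of_eq (by generalize x + n = a; ring))
    (summable_inv_add_pow x hk) (summable_inv_add_pow x (by omega))

noncomputable def digammaSeries (x : ℝ) : ℝ :=
  -eulerMascheroniConstant + ∑' n : ℕ, (((n : ℝ) + 1)⁻¹ - (x + n)⁻¹)

theorem hasDerivAt_digammaSeries_term (n : ℕ) {y : ℝ} (hy : 0 < y) :
    HasDerivAt (fun z : ℝ => ((n : ℝ) + 1)⁻¹ - (z + n)⁻¹) (1 * ((y + n) ^ 2)⁻¹) y := by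
  simpa using (hasDerivAt_inv_add_pow (n : ℝ) 1 (by positivity : y + (n : ℝ) ≠ 0)).const_sub _

theorem summable_digammaSeries_term {x : ℝ} (hx : 0 < x) :
    Summable fun n : ℕ => ((n : ℝ) + 1)⁻¹ - (x + n)⁻¹ := by
  have hc : 0 < min x 1 / 2 := by positivity
  refine summable_of_hasDerivAt_mul_inv_add_pow hc le_rfl
    (fun n y hy => hasDerivAt_digammaSeries_term n (hc.trans hy))
    (x₀ := 1) (by linarith [min_le_right x 1]) ?_ (by linarith [min_le_left x 1])
  simp [add_comm]

theorem hasDerivAt_digammaSeries {x : ℝ} (hx : 0 < x) :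
    HasDerivAt digammaSeries (hurwitzSeries 2 x) x := by
  have h := (hasDerivAt_tsum_of_hasDerivAt_mul_inv_add_pow (half_pos hx) le_rfl
    (fun n y hy => hasDerivAt_digammaSeries_term n ((half_pos hx).trans hy))
    (summable_digammaSeries_term hx) (half_lt_self hx)).const_add (-eulerMascheroniConstant)
  rwa [one_mul] at h

theorem digammaSeries_one : digammaSeries 1 = -eulerMascheroniConstant := by
  simp [digammaSeries, add_comm]

theorem monotoneOn_digammaSeries : MonotoneOn digammaSeries (Ioi 0) := by
  intro x hx y hy hxy
  have : (0 : ℝ) < x := hx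
  refine (add_le_add_iff_left _).2 <| Summable.tsum_le_tsum (fun n => ?_)
    (summable_digammaSeries_term hx) (summable_digammaSeries_term hy)
  gcongr

theorem digammaSeries_add_one {x : ℝ} (hx : 0 < x) :
    digammaSeries (x + 1) = digammaSeries x + x⁻¹ := by
  have h_tendsto : Tendsto (fun n : ℕ => (x + n)⁻¹) atTop (𝓝 0) :=
    tendsto_inv_atTop_zero.comp (tendsto_atTop_add_const_left _ x tendsto_natCast_atTop_atTop)
  have h_diff : ∀ n : ℕ, (((n : ℝ) + 1)⁻¹ - (x + 1 + n)⁻¹) - (((n : ℝ) + 1)⁻¹ - (x + n)⁻¹) =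
      (x + n)⁻¹ - (x + (n + 1 : ℕ))⁻¹ := fun n => by push_cast; ring
  have h_sum₁ := summable_digammaSeries_term (by positivity : 0 < x + 1)
  have h_sum₀ := summable_digammaSeries_term hx
  have h_tele := hasSum_sub_succ_of_tendsto_zero h_tendsto
    (by simpa only [h_diff] using h_sum₁.sub h_sum₀)
  simp only [digammaSeries]
  rw [← sub_eq_iff_eq_add', add_sub_add_left_eq_sub, ← h_sum₁.tsum_sub h_sum₀]
  simpa only [h_diff, Nat.cast_zero, add_zero] using h_tele.tsum_eq

theorem forall_ne_neg_natCast_of_pos {x : ℝ} (hx : 0 < x) (m : ℕ) : x ≠ -m := by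
  have : (0 : ℝ) ≤ m := m.cast_nonneg
  linarith

theorem deriv_log_Gamma_eq_psi {x : ℝ} (hx : ∀ m : ℕ, x ≠ -m) :
    deriv (log ∘ Gamma) x = psi x :=
  deriv.log (differentiableAt_Gamma hx) (Gamma_ne_zero hx)

theorem monotoneOn_psi : MonotoneOn psi (Ioi 0) := by
  refine (convexOn_log_Gamma.monotoneOn_deriv fun x hx => ?_).congr fun x hx => ?_
  · have hx' := forall_ne_neg_natCast_of_pos hx
    exact (differentiableAt_Gamma hx').log (Gamma_ne_zero hx')
  · exact deriv_log_Gamma_eq_psi (forall_ne_neg_natCast_of_pos hx)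

theorem psi_one : psi 1 = -eulerMascheroniConstant := by
  rw [psi, hasDerivAt_Gamma_one.deriv, Gamma_one, div_one]

theorem psi_add_one {x : ℝ} (hx : ∀ m : ℕ, x ≠ -m) : psi (x + 1) = psi x + x⁻¹ := by
  have hx0 : x ≠ 0 := by simpa using hx 0
  have hΓ := Gamma_ne_zero hx
  have h_eq : (fun y => Gamma (y + 1)) =ᶠ[𝓝 x] fun y => y * Gamma y := by
    filter_upwards [isOpen_ne.mem_nhds hx0] with y hy using Gamma_add_one hy
  have hderiv : deriv Gamma (x + 1) = Gamma x + x * deriv Gamma x := by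
    rw [← deriv_comp_add_const, h_eq.deriv_eq,
      ((hasDerivAt_id' x).fun_mul (differentiableAt_Gamma hx).hasDerivAt).deriv, one_mul]
  rw [psi, psi, hderiv, Gamma_add_one hx0]
  field_simp
  ring

theorem psi_eqOn_digammaSeries : EqOn psi digammaSeries (Ioi 0) :=
  eqOn_Ioi_of_monotoneOn_of_add_one_eq monotoneOn_psi monotoneOn_digammaSeries
    (fun _ hx => psi_add_one (forall_ne_neg_natCast_of_pos hx))
    (fun _ hx => digammaSeries_add_one hx) (psi_one.trans digammaSeries_one.symm)

theorem iteratedDeriv_psi {k : ℕ} (hk : 1 ≤ k) {x : ℝ} (hx : 0 < x) :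
    iteratedDeriv k psi x = (-1) ^ (k + 1) * k ! * hurwitzSeries (k + 1) x := by
  induction k, hk using Nat.le_induction generalizing x with
  | base =>
    rw [iteratedDeriv_one,
      (psi_eqOn_digammaSeries.eventuallyEq_of_mem (Ioi_mem_nhds hx)).deriv_eq,
      (hasDerivAt_digammaSeries hx).deriv]
    norm_num
  | succ k hk ih =>
    have h_eq : iteratedDeriv k psi =ᶠ[𝓝 x]
        fun y => (-1) ^ (k + 1) * k ! * hurwitzSeries (k + 1) y :=
      eventually_of_mem (Ioi_mem_nhds hx) fun _ hy => ih hy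
    rw [iteratedDeriv_succ, h_eq.deriv_eq,
      ((hasDerivAt_hurwitzSeries (by omega) hx).const_mul _).deriv, Nat.factorial_succ]
    push_cast
    ring

theorem polygamma_turan_general (m : ℕ) (hm : 0 < m) (t : ℝ) (ht : 0 < t) :
    iteratedDeriv m psi t * iteratedDeriv (m + 2) psi t -
      (iteratedDeriv (m + 1) psi t) ^ 2 ≥ 0 := by
  have h_cs : hurwitzSeries (m + 2) t ^ 2 ≤ hurwitzSeries (m + 1) t * hurwitzSeries (m + 3) t :=
    sq_hurwitzSeries_succ_le (by omega) ht.le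
  have h_fact : ((m + 1)! : ℝ) ^ 2 ≤ m ! * (m + 2)! := by
    exact_mod_cast Nat.factorial_succ_sq_le m
  have h_sign : ((-1 : ℝ) ^ (m + 1)) ^ 2 = 1 := by
    rw [← pow_mul, pow_mul', neg_one_sq, one_pow]
  rw [iteratedDeriv_psi hm ht, iteratedDeriv_psi (by omega) ht, iteratedDeriv_psi (by omega) ht]
  calc _ = ((-1 : ℝ) ^ (m + 1)) ^ 2 * (m ! * (m + 2)! * (hurwitzSeries (m + 1) t *
        hurwitzSeries (m + 3) t) - (m + 1)! ^ 2 * hurwitzSeries (m + 2) t ^ 2) := by ring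
    _ ≥ 0 := by
      rw [h_sign, one_mul, ge_iff_le, sub_nonneg]
      exact mul_le_mul h_fact h_cs (sq_nonneg _) (by positivity)

theorem polygamma_turan (m : ℕ) (hm : 0 < m) (hodd : Odd m) (t : ℝ) (ht : 0 < t) :
    iteratedDeriv m psi t * iteratedDeriv (m + 2) psi t -
      (iteratedDeriv (m + 1) psi t) ^ 2 ≥ 0 :=
  polygamma_turan_general m hm t ht
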